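/- Let 0 < p ≤ 1, let ω be a weight on ℤ^d, and let A be a Banach algebra. For f, g ∈ ℓ^p_ω(ℤ^d, A), the convolution (f ⋆ g)(n) = Σ_{m∈ℤ^d} f(n−m) g(m) is well defined (the series converges absolutely) and ‖f ⋆ g‖_{ℓ^p_ω} ≤ ‖f‖_{ℓ^p_ω} ‖g‖_{ℓ^p_ω}, where ‖f‖_{ℓ^p_ω} = Σ_n ‖f(n)‖^p ω(n)^p. -/

import Mathlib

/-!
For `0 < p ≤ 1` the map `x ↦ x ^ p` is subadditive on `[0, ∞)`, so `‖∑ uᵢ‖ ^ p ≤ ∑ ‖uᵢ‖ ^ p`;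
the same exponent gives `ℓ^p ⊆ ℓ^1`, which makes every convolution series absolutely convergent.
Submultiplicativity of `ω` splits `ω(n) ^ p ≤ ω(n - m) ^ p ω(m) ^ p`, so the weighted `p`-mass of
`f ⋆ g` is dominated termwise by the double series `∑ₙ ∑ₘ F(n - m) G(m)` with
`F = ‖f‖ ^ p ω ^ p`, `G = ‖g‖ ^ p ω ^ p`; the shear `(a, m) ↦ (a + m, m)` identifies that double
series with `(∑ F)(∑ G)`.
-/

section RpowSubadditive

variable {ι E : Type*} [NormedAddCommGroup E] {p : ℝ} {u : ι → E}

theorem summable_norm_of_summable_norm_rpow (hp0 : 0 < p) (hp1 : p ≤ 1)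
    (hu : Summable fun i => ‖u i‖ ^ p) : Summable fun i => ‖u i‖ := by
  have hp : 0 < (ENNReal.ofReal p).toReal := by rwa [ENNReal.toReal_ofReal hp0.le]
  have hmem : Memℓp u (ENNReal.ofReal p) :=
    (memℓp_gen_iff hp).2 (by rwa [ENNReal.toReal_ofReal hp0.le])
  simpa using (memℓp_gen_iff (by norm_num)).1 (hmem.of_exponent_ge (ENNReal.ofReal_le_one.2 hp1))

theorem rpow_tsum_norm_le_tsum_norm_rpow (hp0 : 0 < p) (hp1 : p ≤ 1)
    (hu : Summable fun i => ‖u i‖ ^ p) : (∑' i, ‖u i‖) ^ p ≤ ∑' i, ‖u i‖ ^ p := by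
  have hfinite (s : Finset ι) : (∑ i ∈ s, ‖u i‖) ^ p ≤ ∑' i, ‖u i‖ ^ p :=
    (Finset.le_sum_of_subadditive_on_pred (fun x : ℝ => x ^ p) (0 ≤ ·)
      (Real.zero_rpow hp0.ne').le (fun x y hx hy => Real.rpow_add_le_add_rpow hx hy hp0.le hp1)
      (fun _ _ => add_nonneg) _ fun i _ => norm_nonneg (u i)).trans
      (hu.sum_le_tsum s fun i _ => by positivity)
  exact le_of_tendsto' ((summable_norm_of_summable_norm_rpow hp0 hp1 hu).hasSum.rpow_const
    (Or.inr hp0.le)) hfinite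

theorem rpow_norm_tsum_le_tsum_norm_rpow (hp0 : 0 < p) (hp1 : p ≤ 1)
    (hu : Summable fun i => ‖u i‖ ^ p) : ‖∑' i, u i‖ ^ p ≤ ∑' i, ‖u i‖ ^ p := by
  have hnorm := norm_tsum_le_tsum_norm (f := u) (summable_norm_of_summable_norm_rpow hp0 hp1 hu)
  exact (Real.rpow_le_rpow (norm_nonneg _) hnorm hp0.le).trans
    (rpow_tsum_norm_le_tsum_norm_rpow hp0 hp1 hu)

end RpowSubadditive

section Convolution

variable {M : Type*} [AddCommGroup M]

theorem hasSum_prod_sub_mul_of_nonneg {F G : M → ℝ} (hF : Summable F) (hG : Summable G)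
    (hF0 : 0 ≤ F) (hG0 : 0 ≤ G) :
    HasSum (fun q : M × M => F (q.1 - q.2) * G q.2) ((∑' n, F n) * ∑' n, G n) := by
  let shear : M × M ≃ M × M :=
    { toFun := fun q => (q.1 + q.2, q.2)
      invFun := fun q => (q.1 - q.2, q.2)
      left_inv := fun q => by simp
      right_inv := fun q => by simp }
  rw [← shear.hasSum_iff]
  simpa [shear, Function.comp_def] using
    hF.hasSum.mul hG.hasSum (hF.mul_of_nonneg hG hF0 hG0)

end Convolution

section Weight

variable {M : Type*} [AddGroup M] {p : ℝ} {ω : M → ℝ}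

theorem mul_rpow_mul_weight_rpow_le (hp : 0 ≤ p) (hω0 : ∀ n, 0 ≤ ω n)
    (hωsub : ∀ m n, ω (m + n) ≤ ω m * ω n) {x y : ℝ} (hx : 0 ≤ x) (hy : 0 ≤ y) (n m : M) :
    (x * y) ^ p * ω n ^ p ≤ (x ^ p * ω (n - m) ^ p) * (y ^ p * ω m ^ p) := by
  have hω : ω n ≤ ω (n - m) * ω m := by simpa using hωsub (n - m) m
  calc (x * y) ^ p * ω n ^ p ≤ (x * y) ^ p * (ω (n - m) * ω m) ^ p := by
        gcongr
        exact hω0 n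
    _ = (x ^ p * ω (n - m) ^ p) * (y ^ p * ω m ^ p) := by
        rw [Real.mul_rpow hx hy, Real.mul_rpow (hω0 _) (hω0 _)]
        ring

variable {A : Type*} [NormedRing A] {f g : M → A}

theorem summable_rpow_norm_sub_mul_norm (hp : 0 ≤ p) (hω1 : ∀ n, 1 ≤ ω n)
    (hωsub : ∀ m n, ω (m + n) ≤ ω m * ω n) (n : M)
    (hfib : Summable fun m => (‖f (n - m)‖ ^ p * ω (n - m) ^ p) * (‖g m‖ ^ p * ω m ^ p)) :
    Summable fun m => (‖f (n - m)‖ * ‖g m‖) ^ p := by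
  refine hfib.of_nonneg_of_le (fun m => by positivity) fun m => ?_
  calc (‖f (n - m)‖ * ‖g m‖) ^ p ≤ (‖f (n - m)‖ * ‖g m‖) ^ p * ω n ^ p :=
        le_mul_of_one_le_right (by positivity) (Real.one_le_rpow (hω1 n) hp)
    _ ≤ _ := mul_rpow_mul_weight_rpow_le hp (fun n => zero_le_one.trans (hω1 n)) hωsub
        (norm_nonneg _) (norm_nonneg _) n m

theorem rpow_norm_tsum_sub_mul_mul_weight_rpow_le (hp0 : 0 < p) (hp1 : p ≤ 1) (hω1 : ∀ n, 1 ≤ ω n)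
    (hωsub : ∀ m n, ω (m + n) ≤ ω m * ω n) (n : M)
    (hfib : Summable fun m => (‖f (n - m)‖ ^ p * ω (n - m) ^ p) * (‖g m‖ ^ p * ω m ^ p)) :
    ‖∑' m, f (n - m) * g m‖ ^ p * ω n ^ p ≤
      ∑' m, (‖f (n - m)‖ ^ p * ω (n - m) ^ p) * (‖g m‖ ^ p * ω m ^ p) := by
  have hω0 (n : M) : 0 ≤ ω n := zero_le_one.trans (hω1 n)
  have hle (m : M) : ‖f (n - m) * g m‖ ^ p ≤ (‖f (n - m)‖ * ‖g m‖) ^ p :=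
    Real.rpow_le_rpow (norm_nonneg _) (norm_mul_le _ _) hp0.le
  have hsum : Summable fun m => ‖f (n - m) * g m‖ ^ p :=
    (summable_rpow_norm_sub_mul_norm hp0.le hω1 hωsub n hfib).of_nonneg_of_le
      (fun m => by positivity) hle
  have hterm (m : M) : ‖f (n - m) * g m‖ ^ p * ω n ^ p ≤
      (‖f (n - m)‖ ^ p * ω (n - m) ^ p) * (‖g m‖ ^ p * ω m ^ p) :=
    (mul_le_mul_of_nonneg_right (hle m) (Real.rpow_nonneg (hω0 n) p)).trans
      (mul_rpow_mul_weight_rpow_le hp0.le hω0 hωsub (norm_nonneg _) (norm_nonneg _) n m)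
  calc ‖∑' m, f (n - m) * g m‖ ^ p * ω n ^ p ≤ (∑' m, ‖f (n - m) * g m‖ ^ p) * ω n ^ p :=
        mul_le_mul_of_nonneg_right (rpow_norm_tsum_le_tsum_norm_rpow hp0 hp1 hsum)
          (Real.rpow_nonneg (hω0 n) p)
    _ = ∑' m, ‖f (n - m) * g m‖ ^ p * ω n ^ p := tsum_mul_right.symm
    _ ≤ _ := (hsum.mul_right _).tsum_le_tsum hterm hfib

end Weight

theorem weighted_lp_convolution_inequality_general (d : ℕ) (p : ℝ) (hp0 : 0 < p) (hp1 : p ≤ 1)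
    (ω : (Fin d → ℤ) → ℝ)
    (hω1 : ∀ n, 1 ≤ ω n) (hωsub : ∀ m n, ω (m + n) ≤ ω m * ω n)
    (A : Type*) [NormedRing A]
    (f g : (Fin d → ℤ) → A)
    (hf : Summable (fun n => ‖f n‖ ^ p * ω n ^ p))
    (hg : Summable (fun n => ‖g n‖ ^ p * ω n ^ p)) :
    (∀ n, Summable (fun m => ‖f (n - m)‖ * ‖g m‖)) ∧
    Summable (fun n => ‖∑' m, f (n - m) * g m‖ ^ p * ω n ^ p) ∧
    (∑' n, ‖∑' m, f (n - m) * g m‖ ^ p * ω n ^ p) ≤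
      (∑' n, ‖f n‖ ^ p * ω n ^ p) * (∑' n, ‖g n‖ ^ p * ω n ^ p) := by
  have hωp (n) : 0 ≤ ω n ^ p := Real.rpow_nonneg (zero_le_one.trans (hω1 n)) p
  have hpair := hasSum_prod_sub_mul_of_nonneg hf hg (fun n => mul_nonneg (by positivity) (hωp n))
    (fun n => mul_nonneg (by positivity) (hωp n))
  have hfib (n) := hpair.summable.prod_factor n
  have hconv := hpair.prod_fiberwise fun n => (hfib n).hasSum
  have hbound (n) := rpow_norm_tsum_sub_mul_mul_weight_rpow_le hp0 hp1 hω1 hωsub n (hfib n)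
  have hsummable : Summable fun n => ‖∑' m, f (n - m) * g m‖ ^ p * ω n ^ p :=
    hconv.summable.of_nonneg_of_le (fun n => mul_nonneg (by positivity) (hωp n)) hbound
  refine ⟨fun n => ?_, hsummable, ?_⟩
  · have h := summable_rpow_norm_sub_mul_norm hp0.le hω1 hωsub n (hfib n)
    exact (summable_norm_of_summable_norm_rpow (u := fun m => ‖f (n - m)‖ * ‖g m‖) hp0 hp1
      (by simpa using h)).of_norm
  · exact (hsummable.tsum_le_tsum hbound hconv.summable).trans hconv.tsum_eq.le

theorem weighted_lp_convolution_inequality (d : ℕ) (p : ℝ) (hp0 : 0 < p) (hp1 : p ≤ 1)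
    (ω : (Fin d → ℤ) → ℝ)
    (hω1 : ∀ n, 1 ≤ ω n) (hωsub : ∀ m n, ω (m + n) ≤ ω m * ω n)
    (A : Type*) [NormedRing A] [NormedAlgebra ℂ A] [CompleteSpace A]
    (f g : (Fin d → ℤ) → A)
    (hf : Summable (fun n => ‖f n‖ ^ p * ω n ^ p))
    (hg : Summable (fun n => ‖g n‖ ^ p * ω n ^ p)) :
    (∀ n, Summable (fun m => ‖f (n - m)‖ * ‖g m‖)) ∧
    Summable (fun n => ‖∑' m, f (n - m) * g m‖ ^ p * ω n ^ p) ∧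
    (∑' n, ‖∑' m, f (n - m) * g m‖ ^ p * ω n ^ p) ≤
      (∑' n, ‖f n‖ ^ p * ω n ^ p) * (∑' n, ‖g n‖ ^ p * ω n ^ p) :=
  weighted_lp_convolution_inequality_general d p hp0 hp1 ω hω1 hωsub A f g hf hg
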